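/- Let s > 0, α > 2, p_g > 0 and ξ ≥ 0, and let u ∈ ℝ² satisfy u + s·z ≠ 0 for every z ∈ ℤ²\{(0,0)}. Let (H_z)_{z ∈ ℤ²\{(0,0)}} be independent, identically distributed random variables, each exponentially distributed with mean 1. Then the random series Σ_{z ∈ ℤ²\{(0,0)}} p_g H_z ‖u + s·z‖^{−α} converges almost surely, and E[exp(−ξ·Σ_{z ∈ ℤ²\{(0,0)}} p_g H_z ‖u + s·z‖^{−α})] = ∏_{z ∈ ℤ²\{(0,0)}} (1 + p_g ξ ‖u + s·z‖^{−α})^{−1}. -/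

import Mathlib

open MeasureTheory Real ProbabilityTheory

open Set ENNReal Filter Topology

lemma expKey (φ : ℝ → ℝ) (hφ0 : ∀ x, 0 ≤ x → 0 ≤ φ x)
    (hint : IntegrableOn (fun x => Real.exp (-x) * φ x) (Ioi 0)) :
    ∫⁻ x, (ENNReal.ofReal (if 0 ≤ x then Real.exp (-x) else 0)) * ENNReal.ofReal (φ x) ∂volume
      = ENNReal.ofReal (∫ x in Ioi 0, Real.exp (-x) * φ x) := by
  have h1 : ∀ x, (ENNReal.ofReal (if 0 ≤ x then Real.exp (-x) else 0)) * ENNReal.ofReal (φ x)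
      = Set.indicator (Ici 0) (fun x => ENNReal.ofReal (Real.exp (-x) * φ x)) x := by
    intro x
    by_cases hx : 0 ≤ x
    · simp [hx, Set.indicator_of_mem (mem_Ici.2 hx), ENNReal.ofReal_mul (exp_nonneg _)]
    · simp [hx, Set.indicator_of_notMem (by simpa using hx : x ∉ Ici (0:ℝ))]
  rw [lintegral_congr h1, lintegral_indicator measurableSet_Ici _,
    setLIntegral_congr (Filter.EventuallyEq.symm Ioi_ae_eq_Ici),
    ← ofReal_integral_eq_lintegral_ofReal hint
      (ae_restrict_of_forall_mem measurableSet_Ioi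
        (fun x hx => mul_nonneg (exp_nonneg _) (hφ0 x (le_of_lt hx))))]

lemma expDensity_meas :
    Measurable (fun x : ℝ => ENNReal.ofReal (if 0 ≤ x then Real.exp (-x) else 0)) :=
  Measurable.ennreal_ofReal <| Measurable.ite measurableSet_Ici
    (Real.continuous_exp.comp continuous_neg).measurable measurable_const

lemma expLaw {Ω : Type*} [MeasurableSpace Ω] (P : Measure Ω) [IsProbabilityMeasure P]
    (X : Ω → ℝ) (hX : Measurable X)
    (hlaw : Measure.map X P = volume.withDensity fun x =>
      ENNReal.ofReal (if 0 ≤ x then Real.exp (-x) else 0)) :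
    (∀ᵐ ω ∂P, 0 ≤ X ω) ∧ (∫⁻ ω, ENNReal.ofReal (X ω) ∂P = 1) ∧
      (∀ t : ℝ, 0 ≤ t → ∫ ω, Real.exp (-(t * X ω)) ∂P = (1 + t)⁻¹) := by
  refine ⟨?_, ?_, ?_⟩
  · have h0 : ∀ᵐ x ∂(Measure.map X P), 0 ≤ x := by
      rw [ae_iff]
      have hs : {x : ℝ | ¬ 0 ≤ x} = Iio 0 := by ext x; simp [not_le]
      rw [hs, hlaw, withDensity_apply _ measurableSet_Iio]
      have hz : ∀ x ∈ Iio (0:ℝ),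
          ENNReal.ofReal (if 0 ≤ x then Real.exp (-x) else 0) = (fun _ => (0:ℝ≥0∞)) x := by
        intro x hx
        simp [not_le.2 (mem_Iio.1 hx)]
      rw [setLIntegral_congr_fun measurableSet_Iio hz,
        lintegral_zero]
    exact (ae_map_iff hX.aemeasurable measurableSet_Ici).1 h0
  · rw [← lintegral_map ENNReal.measurable_ofReal hX, hlaw,
      lintegral_withDensity_eq_lintegral_mul _ expDensity_meas ENNReal.measurable_ofReal]
    have hint : IntegrableOn (fun x => Real.exp (-x) * x) (Ioi 0) := by
      have h2 := Real.GammaIntegral_convergent (by norm_num : (0:ℝ) < 2)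
      refine h2.congr_fun (fun x hx => ?_) measurableSet_Ioi
      norm_num [Real.rpow_one]
    have hval : (∫ x in Ioi 0, Real.exp (-x) * x) = 1 := by
      have h2 := Real.Gamma_eq_integral (by norm_num : (0:ℝ) < 2)
      rw [Real.Gamma_two] at h2
      rw [h2]
      refine setIntegral_congr_fun measurableSet_Ioi (fun x hx => ?_)
      norm_num [Real.rpow_one]
    have hk := expKey id (fun x hx => hx) hint
    simp only [id] at hk
    simp only [Pi.mul_apply]
    rw [hk, hval, ENNReal.ofReal_one]
  · intro t ht
    have h1t : (0:ℝ) < 1 + t := by linarith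
    have hcont : Continuous (fun x : ℝ => Real.exp (-(t * x))) := by continuity
    rw [← integral_map hX.aemeasurable hcont.aestronglyMeasurable, hlaw,
      integral_eq_lintegral_of_nonneg_ae (Filter.Eventually.of_forall fun x => exp_nonneg _)
        hcont.aestronglyMeasurable,
      lintegral_withDensity_eq_lintegral_mul _ expDensity_meas
        (hcont.measurable.ennreal_ofReal)]
    simp only [Pi.mul_apply]
    have hφeq : ∀ x : ℝ, Real.exp (-((1+t) * x)) = Real.exp (-x) * Real.exp (-(t * x)) := by
      intro x
      rw [← Real.exp_add]
      ring_nf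
    have hint : IntegrableOn (fun x => Real.exp (-x) * Real.exp (-(t * x))) (Ioi 0) := by
      have h0 : IntegrableOn (fun x : ℝ => Real.exp (-(1+t) * x)) (Ioi 0) :=
        exp_neg_integrableOn_Ioi 0 h1t
      refine h0.congr_fun (fun x _ => ?_) measurableSet_Ioi
      beta_reduce
      rw [neg_mul, hφeq]
    have hk := expKey (fun x => Real.exp (-(t * x))) (fun x _ => exp_nonneg _) hint
    rw [hk]
    have hval2 : ∫ x in Ioi 0, Real.exp (-x) * Real.exp (-(t * x)) = (1 + t)⁻¹ := by
      rw [← setIntegral_congr_fun measurableSet_Ioi (fun x _ => hφeq x)]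
      have hc := integral_comp_mul_left_Ioi (fun x : ℝ => Real.exp (-x)) 0 h1t
      rw [mul_zero, integral_exp_neg_Ioi_zero] at hc
      rw [hc, smul_eq_mul, mul_one]
    rw [hval2, ENNReal.toReal_ofReal (by positivity)]

/-- The grid point `s·z = (s z₁, s z₂)` for `z ∈ ℤ²`. -/
noncomputable def gridPt (s : ℝ) (k : ℤ × ℤ) : EuclideanSpace ℝ (Fin 2) :=
  (WithLp.equiv 2 (Fin 2 → ℝ)).symm ![s * (k.1 : ℝ), s * (k.2 : ℝ)]

lemma gridPt_apply (s : ℝ) (k : ℤ × ℤ) (i : Fin 2) :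
    gridPt s k i = ![s * (k.1 : ℝ), s * (k.2 : ℝ)] i := rfl

lemma coord_abs_le_norm (v : EuclideanSpace ℝ (Fin 2)) (i : Fin 2) : |v i| ≤ ‖v‖ := by
  rw [EuclideanSpace.norm_eq]
  have h : |v i| = Real.sqrt (‖v i‖ ^ 2) := by
    rw [Real.sqrt_sq_eq_abs, abs_norm, Real.norm_eq_abs]
  rw [h]
  apply Real.sqrt_le_sqrt
  exact Finset.single_le_sum (f := fun j => ‖v j‖ ^ 2) (fun j _ => by positivity)
    (Finset.mem_univ i)

lemma gridPt_norm_ge (s : ℝ) (hs : 0 < s) (k : ℤ × ℤ) (i : Fin 2) :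
    s * |(![(k.1 : ℝ), (k.2 : ℝ)]) i| ≤ ‖gridPt s k‖ := by
  have := coord_abs_le_norm (gridPt s k) i
  rw [gridPt_apply] at this
  fin_cases i <;> simpa [abs_mul, abs_of_pos hs] using this

lemma vecnorm_le (s : ℝ) (hs : 0 < s) (k : ℤ × ℤ) :
    s * ‖(![k.1, k.2] : Fin 2 → ℤ)‖ ≤ ‖gridPt s k‖ := by
  rw [mul_comm, ← le_div_iff₀ hs]
  rw [pi_norm_le_iff_of_nonneg (by positivity)]
  intro i
  rw [le_div_iff₀ hs]
  have := gridPt_norm_ge s hs k i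
  fin_cases i <;>
    simpa [Int.norm_eq_abs, mul_comm, Int.cast_abs] using this

lemma gridPt_zero (s : ℝ) : gridPt s (0, 0) = 0 := by
  ext i
  rw [gridPt_apply]
  fin_cases i <;> simp <;> rfl

lemma gridSummable {s α : ℝ} (hs : 0 < s) (hα : 2 < α) (u : EuclideanSpace ℝ (Fin 2)) :
    Summable (fun z : ℤ × ℤ => ‖u + gridPt s z‖ ^ (-α)) := by
  -- summability of the comparison function over ℤ × ℤ
  have hG : Summable (fun z : ℤ × ℤ => ‖(![z.1, z.2] : Fin 2 → ℤ)‖ ^ (-α)) := by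
    have h := EisensteinSeries.summable_one_div_norm_rpow hα
    refine (Equiv.summable_iff (finTwoArrowEquiv ℤ)).1 (h.congr fun x => ?_)
    show ‖x‖ ^ (-α) = ‖(![x 0, x 1] : Fin 2 → ℤ)‖ ^ (-α)
    have hx : (![x 0, x 1] : Fin 2 → ℤ) = x := by
      funext i; fin_cases i <;> rfl
    rw [hx]
  set S : Set (ℤ × ℤ) := {z | ‖gridPt s z‖ < 2 * ‖u‖ + 1} with hS
  have hSfin : S.Finite := by
    set N : ℤ := ⌈(2 * ‖u‖ + 1) / s⌉ with hN
    apply Set.Finite.subset (Set.Finite.prod (Set.finite_Icc (-N) N) (Set.finite_Icc (-N) N))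
    intro z hz
    have hb : ∀ i, s * |(![(z.1 : ℝ), (z.2 : ℝ)]) i| ≤ 2 * ‖u‖ + 1 := fun i =>
      le_of_lt (lt_of_le_of_lt (gridPt_norm_ge s hs z i) hz)
    have h1 := hb 0; have h2 := hb 1
    simp only [Matrix.cons_val_zero, Matrix.cons_val_one, Matrix.head_cons] at h1 h2
    have hle : ∀ m : ℤ, s * |(m : ℝ)| ≤ 2 * ‖u‖ + 1 → -N ≤ m ∧ m ≤ N := by
      intro m hm
      have : |(m : ℝ)| ≤ (N : ℝ) := by
        have h3 : |(m : ℝ)| ≤ (2 * ‖u‖ + 1) / s := by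
          rw [le_div_iff₀ hs]; linarith [hm]
        exact h3.trans (Int.le_ceil _)
      rw [← Int.cast_abs, Int.cast_le] at this
      exact ⟨neg_le_of_abs_le this, le_of_abs_le this⟩
    exact ⟨Set.mem_Icc.2 (hle z.1 h1), Set.mem_Icc.2 (hle z.2 h2)⟩
  rw [← summable_subtype_and_compl (s := S)]
  constructor
  · have : Finite ↥S := hSfin
    exact Summable.of_finite
  · have hC : Summable (fun z : ↥Sᶜ => (s/2) ^ (-α) * ‖(![(z : ℤ × ℤ).1, (z : ℤ × ℤ).2] : Fin 2 → ℤ)‖ ^ (-α)) :=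
      ((hG.mul_left _).subtype _)
    refine hC.of_nonneg_of_le (fun z => Real.rpow_nonneg (norm_nonneg _) _) fun z => ?_
    obtain ⟨z, hz⟩ := z
    have hzS : ¬ ‖gridPt s z‖ < 2 * ‖u‖ + 1 := hz
    push_neg at hzS
    have hg1 : (1:ℝ) ≤ ‖gridPt s z‖ := le_trans (by linarith [norm_nonneg u]) hzS
    have hvpos : 0 < ‖(![z.1, z.2] : Fin 2 → ℤ)‖ := by
      rcases eq_or_lt_of_le (norm_nonneg (![z.1, z.2] : Fin 2 → ℤ)) with h | h
      · exfalso
        have hzero : (![z.1, z.2] : Fin 2 → ℤ) = 0 := by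
          rwa [eq_comm, norm_eq_zero] at h
        have h1 : z.1 = 0 := congrFun hzero 0
        have h2 : z.2 = 0 := congrFun hzero 1
        have : z = (0, 0) := Prod.ext h1 h2
        rw [this, gridPt_zero, norm_zero] at hg1
        linarith
      · exact h
    have hlow : (s/2) * ‖(![z.1, z.2] : Fin 2 → ℤ)‖ ≤ ‖u + gridPt s z‖ := by
      have htri : ‖gridPt s z‖ - ‖u‖ ≤ ‖u + gridPt s z‖ := by
        have := norm_add_le (u + gridPt s z) (-u)
        simp only [add_neg_cancel_comm, norm_neg] at this
        linarith
      have h2 : ‖gridPt s z‖ / 2 ≤ ‖gridPt s z‖ - ‖u‖ := by linarith [hzS]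
      have h3 := vecnorm_le s hs z
      calc (s/2) * ‖(![z.1, z.2] : Fin 2 → ℤ)‖ = (s * ‖(![z.1, z.2] : Fin 2 → ℤ)‖)/2 := by ring
        _ ≤ ‖gridPt s z‖ / 2 := by linarith
        _ ≤ ‖u + gridPt s z‖ := le_trans h2 htri
    have := Real.rpow_le_rpow_of_nonpos (mul_pos (by positivity) hvpos)
      hlow (by linarith : -α ≤ 0)
    calc ‖u + gridPt s z‖ ^ (-α) ≤ ((s/2) * ‖(![z.1, z.2] : Fin 2 → ℤ)‖) ^ (-α) := this
      _ = (s/2) ^ (-α) * ‖(![z.1, z.2] : Fin 2 → ℤ)‖ ^ (-α) :=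
          Real.mul_rpow (by positivity) (norm_nonneg _)

/-- Lemma 4, eq. (30), conditional form: with i.i.d. unit-mean exponential
fading gains `H_z`, the interference series `Σ_{z ≠ 0} p_g H_z ‖u + s·z‖^{−α}` converges a.s.
and its Laplace transform at `ξ` equals `∏_{z ≠ 0} (1 + p_g ξ ‖u + s·z‖^{−α})^{−1}`. -/
theorem grid_interference_laplace_transform
    {Ω : Type*} [MeasurableSpace Ω] (P : Measure Ω) [IsProbabilityMeasure P]
    (s α pg ξ : ℝ) (hs : 0 < s) (hα : 2 < α) (hpg : 0 < pg) (hξ : 0 ≤ ξ)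
    (u : EuclideanSpace ℝ (Fin 2))
    (hu : ∀ z : ℤ × ℤ, z ≠ (0, 0) → u + gridPt s z ≠ 0)
    (H : {z : ℤ × ℤ // z ≠ (0, 0)} → Ω → ℝ)
    (hmeas : ∀ z, Measurable (H z))
    (hlaw : ∀ z, Measure.map (H z) P = volume.withDensity fun x =>
      ENNReal.ofReal (if 0 ≤ x then Real.exp (-x) else 0))
    (hindep : iIndepFun H P) :
    (∀ᵐ ω ∂P, Summable fun z : {z : ℤ × ℤ // z ≠ (0, 0)} =>
        pg * H z ω * ‖u + gridPt s (z : ℤ × ℤ)‖ ^ (-α)) ∧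
    ∫ ω, Real.exp (-(ξ * ∑' z : {z : ℤ × ℤ // z ≠ (0, 0)},
        pg * H z ω * ‖u + gridPt s (z : ℤ × ℤ)‖ ^ (-α))) ∂P
      = ∏' z : {z : ℤ × ℤ // z ≠ (0, 0)},
          (1 + pg * ξ * ‖u + gridPt s (z : ℤ × ℤ)‖ ^ (-α))⁻¹ := by
  classical
  have hlawf := fun z : {z : ℤ × ℤ // z ≠ (0, 0)} => expLaw P (H z) (hmeas z) (hlaw z)
  set n : {z : ℤ × ℤ // z ≠ (0, 0)} → ℝ :=
    fun z => ‖u + gridPt s (z : ℤ × ℤ)‖ ^ (-α) with hn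
  set c : {z : ℤ × ℤ // z ≠ (0, 0)} → ℝ := fun z => pg * n z with hc
  have hn_pos : ∀ z, 0 < n z := fun z =>
    Real.rpow_pos_of_pos (norm_pos_iff.2 (hu z z.2)) _
  have hc_pos : ∀ z, 0 < c z := fun z => mul_pos hpg (hn_pos z)
  have hc_sum : Summable c := ((gridSummable hs hα u).subtype _).mul_left pg
  have hH0 : ∀ᵐ ω ∂P, ∀ z, 0 ≤ H z ω := ae_all_iff.2 fun z => (hlawf z).1
  have hsum_ae : ∀ᵐ ω ∂P, Summable fun z => c z * H z ω := by
    have hmeasf : ∀ z, Measurable fun ω => ENNReal.ofReal (c z * H z ω) :=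
      fun z => ((hmeas z).const_mul (c z)).ennreal_ofReal
    have hlint : ∫⁻ ω, ∑' z, ENNReal.ofReal (c z * H z ω) ∂P ≠ ⊤ := by
      rw [lintegral_tsum fun z => (hmeasf z).aemeasurable]
      have heach : ∀ z, ∫⁻ ω, ENNReal.ofReal (c z * H z ω) ∂P = ENNReal.ofReal (c z) := by
        intro z
        calc ∫⁻ ω, ENNReal.ofReal (c z * H z ω) ∂P
            = ∫⁻ ω, ENNReal.ofReal (c z) * ENNReal.ofReal (H z ω) ∂P := by
              apply lintegral_congr fun ω => ?_
              rw [← ENNReal.ofReal_mul (hc_pos z).le]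
          _ = ENNReal.ofReal (c z) * ∫⁻ ω, ENNReal.ofReal (H z ω) ∂P :=
              lintegral_const_mul _ (hmeas z).ennreal_ofReal
          _ = ENNReal.ofReal (c z) := by rw [(hlawf z).2.1, mul_one]
      rw [tsum_congr heach,
        ← ENNReal.ofReal_tsum_of_nonneg (fun z => (hc_pos z).le) hc_sum]
      exact ENNReal.ofReal_ne_top
    filter_upwards [ae_lt_top (Measurable.ennreal_tsum hmeasf) hlint, hH0] with ω hω hω0
    have h1 : Summable fun z => (ENNReal.ofReal (c z * H z ω)).toReal :=
      ENNReal.summable_toReal hω.ne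
    refine h1.congr fun z => ?_
    rw [ENNReal.toReal_ofReal (mul_nonneg (hc_pos z).le (hω0 z))]
  have hterm : ∀ ω, ∀ z, pg * H z ω * n z = c z * H z ω := by
    intro ω z; simp only [hc]; ring
  constructor
  · filter_upwards [hsum_ae] with ω hω
    exact hω.congr fun z => (hterm ω z).symm
  · set t : {z : ℤ × ℤ // z ≠ (0, 0)} → ℝ := fun z => ξ * c z with htdef
    have ht0 : ∀ z, 0 ≤ t z := fun z => mul_nonneg hξ (hc_pos z).le
    set g : {z : ℤ × ℤ // z ≠ (0, 0)} → Ω → ℝ :=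
      fun z ω => Real.exp (-(t z * H z ω)) with hgdef
    have hg_meas : ∀ z, Measurable (g z) := fun z =>
      Real.continuous_exp.measurable.comp (((hmeas z).const_mul (t z)).neg)
    have hg_indep : iIndepFun g P :=
      hindep.comp (fun z x => Real.exp (-(t z * x))) fun z =>
        Real.continuous_exp.measurable.comp ((measurable_id.const_mul (t z)).neg)
    have hg_int : ∀ z, ∫ ω, g z ω ∂P = (1 + t z)⁻¹ := fun z => (hlawf z).2.2 (t z) (ht0 z)
    have hg01 : ∀ z ω, 0 ≤ H z ω → g z ω ≤ 1 := by
      intro z ω h0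
      rw [hgdef]
      exact Real.exp_le_one_iff.2 (neg_nonpos.2 (mul_nonneg (ht0 z) h0))
    have hP1 : ∀ F : Finset {z : ℤ × ℤ // z ≠ (0, 0)},
        ∫ ω, ∏ z ∈ F, g z ω ∂P = ∏ z ∈ F, (1 + t z)⁻¹ := by
      intro F
      induction F using Finset.induction_on with
      | empty => simp
      | @insert a F ha ih =>
        have hX : Measurable (∏ z ∈ F, g z) := by
          rw [Finset.prod_fn]
          exact Finset.measurable_prod _ fun z _ => hg_meas z
        have hip : IndepFun (∏ z ∈ F, g z) (g a) P :=
          hg_indep.indepFun_finsetProd_of_notMem hg_meas ha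
        have heq : ∀ ω, ∏ z ∈ insert a F, g z ω = (∏ z ∈ F, g z) ω * g a ω := by
          intro ω
          rw [Finset.prod_insert ha, Finset.prod_apply, mul_comm]
        calc ∫ ω, ∏ z ∈ insert a F, g z ω ∂P
            = ∫ ω, (∏ z ∈ F, g z) ω * g a ω ∂P := by simp_rw [heq]
          _ = (∫ ω, (∏ z ∈ F, g z) ω ∂P) * ∫ ω, g a ω ∂P :=
              hip.integral_fun_mul_eq_mul_integral hX.aestronglyMeasurable (hg_meas a).aestronglyMeasurable
          _ = (∏ z ∈ F, (1 + t z)⁻¹) * (1 + t a)⁻¹ := by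
              rw [hg_int a, ← ih]
              congr 1
              apply integral_congr_ae (Filter.Eventually.of_forall fun ω => ?_)
              rw [Finset.prod_apply]
          _ = ∏ z ∈ insert a F, (1 + t z)⁻¹ := by rw [Finset.prod_insert ha]; ring
    have hlim : Tendsto (fun F : Finset {z : ℤ × ℤ // z ≠ (0, 0)} =>
          ∫ ω, ∏ z ∈ F, g z ω ∂P) atTop
        (𝓝 (∫ ω, Real.exp (-(ξ * ∑' z, c z * H z ω)) ∂P)) := by
      apply tendsto_integral_filter_of_dominated_convergence (fun _ => (1:ℝ))
      · exact Filter.Eventually.of_forall fun F =>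
          (Finset.measurable_prod F fun z _ => hg_meas z).aestronglyMeasurable
      · refine Filter.Eventually.of_forall fun F => ?_
        filter_upwards [hH0] with ω hω0
        rw [Real.norm_eq_abs, abs_of_nonneg (Finset.prod_nonneg fun z _ => (Real.exp_pos _).le)]
        exact Finset.prod_le_one (fun z _ => (Real.exp_pos _).le) fun z _ => hg01 z ω (hω0 z)
      · exact integrable_const 1
      · filter_upwards [hsum_ae] with ω hω
        have h1 : Tendsto (fun F : Finset {z : ℤ × ℤ // z ≠ (0, 0)} =>
            ∑ z ∈ F, c z * H z ω) atTop (𝓝 (∑' z, c z * H z ω)) := hω.hasSum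
        have h2 : Continuous fun r : ℝ => Real.exp (-(ξ * r)) :=
          Real.continuous_exp.comp (continuous_const.mul continuous_id).neg
        refine ((h2.tendsto _).comp h1).congr fun F => ?_
        show Real.exp (-(ξ * ∑ z ∈ F, c z * H z ω)) = ∏ z ∈ F, g z ω
        rw [hgdef]
        simp only []
        rw [← Real.exp_sum]
        congr 1
        rw [Finset.sum_neg_distrib, Finset.mul_sum]
        congr 1
        apply Finset.sum_congr rfl fun z _ => by rw [htdef]; ring
    have hfinal : HasProd (fun z : {z : ℤ × ℤ // z ≠ (0, 0)} => (1 + t z)⁻¹)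
        (∫ ω, Real.exp (-(ξ * ∑' z, c z * H z ω)) ∂P) := by
      have h := hlim
      simp_rw [hP1] at h
      exact h
    have hgoal1 : ∀ ω, Real.exp (-(ξ * ∑' z, pg * H z ω * n z))
        = Real.exp (-(ξ * ∑' z, c z * H z ω)) := by
      intro ω
      rw [tsum_congr (hterm ω)]
    calc ∫ ω, Real.exp (-(ξ * ∑' z, pg * H z ω * n z)) ∂P
        = ∫ ω, Real.exp (-(ξ * ∑' z, c z * H z ω)) ∂P := by simp_rw [hgoal1]
      _ = ∏' z, (1 + t z)⁻¹ := hfinal.tprod_eq.symm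
      _ = ∏' z : {z : ℤ × ℤ // z ≠ (0, 0)}, (1 + pg * ξ * n z)⁻¹ := by
          apply tprod_congr fun z => ?_
          rw [htdef, hc]
          ring_nf
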